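/- Let λ be a nonnegative continuous linear functional on L^∞(Q_T), and let u, v be measurable matrix-valued functions on Q_T with |D u| ≤ ψ ≤ ψ* and |D v| ≤ ψ a.e., where λ(ψ − |D u|) = 0. Then the pairing satisfies ⟨λ D u, D(v − u)⟩ := λ(D u : D(v − u)) ≤ 0. -/

import Mathlib

open MeasureTheory

open scoped RealInnerProductSpace

theorem real_inner_sub_le_mul_sub_norm {E : Type*} [NormedAddCommGroup E]
    [InnerProductSpace ℝ E] {a b : E} {p c : ℝ} (ha : ‖a‖ ≤ p) (hpc : p ≤ c) (hb : ‖b‖ ≤ p) :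
    ⟪a, b - a⟫ ≤ c * (p - ‖a‖) :=
  calc ⟪a, b - a⟫ = ⟪a, b⟫ - ‖a‖ ^ 2 := by rw [inner_sub_right, real_inner_self_eq_norm_sq]
    _ ≤ ‖a‖ * ‖b‖ - ‖a‖ ^ 2 := by gcongr; exact real_inner_le_norm a b
    _ ≤ ‖a‖ * (p - ‖a‖) := by nlinarith [norm_nonneg a]
    _ ≤ c * (p - ‖a‖) := mul_le_mul_of_nonneg_right (ha.trans hpc) (sub_nonneg.mpr ha)

theorem Lp.map_le_map_of_ae_le {α : Type*} [MeasurableSpace α] {μ : Measure α}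
    {p : ENNReal} {F : Type*} [FunLike F (Lp ℝ p μ) ℝ] [AddMonoidHomClass F (Lp ℝ p μ) ℝ]
    (lam : F) (hpos : ∀ g : Lp ℝ p μ, (∀ᵐ x ∂μ, 0 ≤ g x) → 0 ≤ lam g)
    {f g : Lp ℝ p μ} (hfg : ∀ᵐ x ∂μ, f x ≤ g x) : lam f ≤ lam g := by
  have h := hpos (g - f) <| by
    filter_upwards [hfg, Lp.coeFn_sub g f] with x hx hsub
    rw [hsub, Pi.sub_apply, sub_nonneg]
    exact hx
  rwa [map_sub, sub_nonneg] at h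

/-- If `λ ≥ 0` is a continuous linear functional on `L^∞(Q_T)`, `|D u| ≤ ψ ≤ ψ*`,
`|D v| ≤ ψ` a.e. and `λ(ψ − |D u|) = 0`, then `λ(D u : D(v − u)) ≤ 0`.
Matrix values carry the Frobenius inner product, modelled by
`EuclideanSpace ℝ (Fin d × Fin d)`. -/
theorem stmt16 {d : ℕ} {α : Type*} [MeasurableSpace α] (μ : Measure α)
    (lam : Lp ℝ ⊤ μ →L[ℝ] ℝ)
    (hpos : ∀ g : Lp ℝ ⊤ μ, (∀ᵐ x ∂μ, 0 ≤ g x) → 0 ≤ lam g)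
    (ψS : ℝ) (ψ : α → ℝ)
    (Du Dv : α → EuclideanSpace ℝ (Fin d × Fin d))
    (hu : ∀ᵐ x ∂μ, ‖Du x‖ ≤ ψ x ∧ ψ x ≤ ψS)
    (hv : ∀ᵐ x ∂μ, ‖Dv x‖ ≤ ψ x)
    (slack : Lp ℝ ⊤ μ) (hslack : ∀ᵐ x ∂μ, slack x = ψ x - ‖Du x‖)
    (hcomp : lam slack = 0)
    (g : Lp ℝ ⊤ μ) (hg : ∀ᵐ x ∂μ, g x = ⟪Du x, Dv x - Du x⟫) :
    lam g ≤ 0 :=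
  calc lam g ≤ lam (ψS • slack) := by
        apply Lp.map_le_map_of_ae_le lam hpos
        filter_upwards [hu, hv, hslack, hg, Lp.coeFn_smul ψS slack]
          with x ⟨hDu, hψ⟩ hDv hslack_x hg_x hsmul
        rw [hg_x, hsmul, Pi.smul_apply, hslack_x, smul_eq_mul]
        exact real_inner_sub_le_mul_sub_norm hDu hψ hDv
    _ = 0 := by rw [map_smul, hcomp, smul_zero]
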